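/- arXiv:1602.08901 — 2 statements merged into one kernel-verified Lean document; each statement's English description precedes it below -/
import Mathlib

section
/- Let E̅₁ and E_₂ be upper and lower expectation functionals given by credal sets M₁, M₂ of probability mass functions on a finite set X. Then max_{f∈L₁} (E̅₁(f) - E_₂(f)) = max_{A⊆X} (E̅₁(1_A) - E_₂(1_A)). -/
open Finset Set

noncomputable section

/-- Functions with values in [0,1]. -/
def L1 (X : Type*) : Set (X → ℝ) := {f | ∀ x, 0 ≤ f x ∧ f x ≤ 1}

/-- Probability mass function on a finite set. -/
def IsPMF {X : Type*} [Fintype X] (p : X → ℝ) : Prop :=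
  (∀ x, 0 ≤ p x) ∧ ∑ x, p x = 1

/-- A credal set: nonempty compact convex set of pmfs. -/
def IsCredal {X : Type*} [Fintype X] (M : Set (X → ℝ)) : Prop :=
  M.Nonempty ∧ IsCompact M ∧ Convex ℝ M ∧ ∀ p ∈ M, IsPMF p

/-- Linear expectation with respect to a pmf. -/
def linExp {X : Type*} [Fintype X] (p f : X → ℝ) : ℝ := ∑ x, p x * f x

/-- Upper expectation functional of a credal set. -/
def upperExp {X : Type*} [Fintype X] (M : Set (X → ℝ)) (f : X → ℝ) : ℝ :=
  sSup ((fun p => linExp p f) '' M)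

/-- Lower expectation functional of a credal set. -/
def lowerExp {X : Type*} [Fintype X] (M : Set (X → ℝ)) (f : X → ℝ) : ℝ :=
  sInf ((fun p => linExp p f) '' M)

/-- Chebyshev (sup) distance between functions. -/
def dCheb {X : Type*} (f g : X → ℝ) : ℝ := ⨆ x, |f x - g x|

/-- Distance between two (upper) expectation functionals. -/
def dFun {X : Type*} (F G : (X → ℝ) → ℝ) : ℝ :=
  sSup ((fun f => |F f - G f|) '' L1 X)

/-- Distance between an upper and a lower expectation functional. -/
def dUL {X : Type*} (F G : (X → ℝ) → ℝ) : ℝ :=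
  sSup ((fun f => F f - G f) '' L1 X)

/-- Upper transition operator: rows are upper expectation functionals. -/
def IsUpperTrans {X : Type*} [Fintype X] (T : (X → ℝ) → (X → ℝ)) : Prop :=
  ∃ M : X → Set (X → ℝ), (∀ x, IsCredal (M x)) ∧ ∀ f x, T f x = upperExp (M x) f

/-- Matching pair of upper and lower transition operators from the same credal sets. -/
def IsTransPair {X : Type*} [Fintype X] (T Tl : (X → ℝ) → (X → ℝ)) : Prop :=
  ∃ M : X → Set (X → ℝ), (∀ x, IsCredal (M x)) ∧
    (∀ f x, T f x = upperExp (M x) f) ∧ (∀ f x, Tl f x = lowerExp (M x) f)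

/-- Distance between two (upper) transition operators. -/
def dOp {X : Type*} (T T' : (X → ℝ) → (X → ℝ)) : ℝ :=
  sSup ((fun f => dCheb (T f) (T' f)) '' L1 X)

/-- Imprecision distance between an upper and a lower transition operator. -/
def dOpUL {X : Type*} (T Tl : (X → ℝ) → (X → ℝ)) : ℝ :=
  sSup ((fun f => ⨆ x, (T f x - Tl f x)) '' L1 X)

/-- Weak coefficient of ergodicity. -/
def rho {X : Type*} (T : (X → ℝ) → (X → ℝ)) : ℝ :=
  sSup {r | ∃ f ∈ L1 X, ∃ x y : X, r = |T f x - T f y|}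


section aux
variable {X : Type*} [Fintype X]

lemma linExp_continuous (f : X → ℝ) : Continuous fun p : X → ℝ => linExp p f := by
  unfold linExp
  exact continuous_finset_sum _ fun x _ => ((continuous_apply x).mul continuous_const)

lemma upperExp_attained {M : Set (X → ℝ)} (h : IsCredal M) (f : X → ℝ) :
    ∃ p ∈ M, upperExp M f = linExp p f ∧ ∀ q ∈ M, linExp q f ≤ linExp p f := by
  obtain ⟨p, hp, h1, h2⟩ := h.2.1.exists_sSup_image_eq_and_ge h.1
    ((linExp_continuous f).continuousOn)
  exact ⟨p, hp, h1, h2⟩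

lemma lowerExp_attained {M : Set (X → ℝ)} (h : IsCredal M) (f : X → ℝ) :
    ∃ p ∈ M, lowerExp M f = linExp p f ∧ ∀ q ∈ M, linExp p f ≤ linExp q f := by
  obtain ⟨p, hp, h1, h2⟩ := h.2.1.exists_sInf_image_eq_and_le h.1
    ((linExp_continuous f).continuousOn)
  exact ⟨p, hp, h1, h2⟩

lemma linExp_mem_Icc {M : Set (X → ℝ)} (h : IsCredal M) {p : X → ℝ} (hp : p ∈ M)
    {f : X → ℝ} (hf : f ∈ L1 X) : linExp p f ∈ Set.Icc (0:ℝ) 1 := by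
  obtain ⟨hnn, hsum⟩ := h.2.2.2 p hp
  constructor
  · exact Finset.sum_nonneg fun x _ => mul_nonneg (hnn x) (hf x).1
  · calc linExp p f ≤ ∑ x, p x := Finset.sum_le_sum fun x _ => by
          nlinarith [(hf x).1, (hf x).2, hnn x]
    _ = 1 := hsum

lemma indicator_mem_L1 (A : Set X) : Set.indicator A (1 : X → ℝ) ∈ L1 X := by
  intro x
  by_cases hx : x ∈ A <;> simp [Set.indicator, hx]

end aux

theorem stmt4 {X : Type*} [Fintype X] [Nonempty X]
    (M1 M2 : Set (X → ℝ)) (h1 : IsCredal M1) (h2 : IsCredal M2) :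
    dUL (upperExp M1) (lowerExp M2) =
      sSup {r : ℝ | ∃ A : Set X,
        r = upperExp M1 (Set.indicator A 1) - lowerExp M2 (Set.indicator A 1)} := by
  unfold dUL
  have hbddL : ∀ f ∈ L1 X, upperExp M1 f - lowerExp M2 f ≤ 1 := by
    intro f hf
    obtain ⟨p, hp, he, -⟩ := upperExp_attained h1 f
    obtain ⟨q, hq, he', -⟩ := lowerExp_attained h2 f
    have := linExp_mem_Icc h1 hp hf
    have := linExp_mem_Icc h2 hq hf
    rw [he, he']
    simp only [Set.mem_Icc] at *
    linarith
  have hne : (L1 X).Nonempty := ⟨fun _ => 0, fun x => by norm_num⟩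
  have key : ∀ f ∈ L1 X, ∃ A : Set X,
      upperExp M1 f - lowerExp M2 f ≤
        upperExp M1 (Set.indicator A 1) - lowerExp M2 (Set.indicator A 1) := by
    intro f hf
    obtain ⟨p, hp, he, -⟩ := upperExp_attained h1 f
    obtain ⟨q, hq, he', -⟩ := lowerExp_attained h2 f
    set A : Set X := {x | q x ≤ p x} with hA
    refine ⟨A, ?_⟩
    obtain ⟨-, -, hI1, hub1⟩ := upperExp_attained h1 (Set.indicator A 1)
    obtain ⟨-, -, hI2, hlb2⟩ := lowerExp_attained h2 (Set.indicator A 1)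
    have h3 : linExp p f - linExp q f ≤
        linExp p (Set.indicator A 1) - linExp q (Set.indicator A 1) := by
      unfold linExp
      rw [← Finset.sum_sub_distrib, ← Finset.sum_sub_distrib]
      refine Finset.sum_le_sum fun x _ => ?_
      by_cases hx : x ∈ A
      · have : q x ≤ p x := hx
        simp only [Set.indicator_of_mem hx, Pi.one_apply, mul_one]
        nlinarith [(hf x).1, (hf x).2]
      · have : p x < q x := not_le.mp hx
        simp only [Set.indicator_of_notMem hx, mul_zero]
        nlinarith [(hf x).1, (hf x).2]
    have h4 : linExp p (Set.indicator A 1) ≤ upperExp M1 (Set.indicator A 1) := by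
      obtain ⟨p', hp', heq, hub⟩ := upperExp_attained h1 (Set.indicator A 1)
      rw [heq]; exact hub p hp
    have h5 : lowerExp M2 (Set.indicator A 1) ≤ linExp q (Set.indicator A 1) := by
      obtain ⟨q', hq', heq, hlb⟩ := lowerExp_attained h2 (Set.indicator A 1)
      rw [heq]; exact hlb q hq
    rw [he, he']
    linarith
  have hRne : {r : ℝ | ∃ A : Set X,
      r = upperExp M1 (Set.indicator A 1) - lowerExp M2 (Set.indicator A 1)}.Nonempty :=
    ⟨_, ∅, rfl⟩
  have hRbdd : BddAbove {r : ℝ | ∃ A : Set X,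
      r = upperExp M1 (Set.indicator A 1) - lowerExp M2 (Set.indicator A 1)} := by
    refine ⟨1, fun r hr => ?_⟩
    obtain ⟨A, rfl⟩ := hr
    exact hbddL _ (indicator_mem_L1 A)
  have hLbdd : BddAbove ((fun f => upperExp M1 f - lowerExp M2 f) '' L1 X) := by
    refine ⟨1, fun r hr => ?_⟩
    obtain ⟨f, hf, rfl⟩ := hr
    exact hbddL f hf
  apply le_antisymm
  · refine csSup_le (hne.image _) ?_
    rintro r ⟨f, hf, rfl⟩
    obtain ⟨A, hA⟩ := key f hf
    exact hA.trans (le_csSup hRbdd ⟨A, rfl⟩)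
  · refine csSup_le hRne ?_
    rintro r ⟨A, rfl⟩
    exact le_csSup hLbdd ⟨_, indicator_mem_L1 A, rfl⟩
end
end

section
/- The weak coefficient of ergodicity is submultiplicative: ρ(T̅∘S̅) ≤ ρ(T̅)·ρ(S̅) for arbitrary upper transition operators T̅ and S̅ on a finite state space. -/
open Finset Set

noncomputable section

/-!
An upper transition operator commutes with nonnegative affine maps: `T̅ (a h + b) = a T̅ h + b`
for `a ≥ 0`. The function `g = S̅ f` (with `f ∈ L₁`) has values in an interval `[m, m + c]` whose
width `c` is a difference `(S̅ f)(x₁) - (S̅ f)(x₀)`, hence at most `ρ(S̅)`. Writing `g = c h + m` with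
`h ∈ L₁` gives `(T̅ g)(x) - (T̅ g)(y) = c ((T̅ h)(x) - (T̅ h)(y))`, which is at most `ρ(S̅) ρ(T̅)` in
absolute value.
-/

section

variable {X : Type*} [Fintype X]

lemma linExp_mem_bounds {p : X → ℝ} (hp : IsPMF p) {f : X → ℝ} {lo hi : ℝ}
    (hf : ∀ x, lo ≤ f x ∧ f x ≤ hi) : lo ≤ linExp p f ∧ linExp p f ≤ hi := by
  have total (c : ℝ) : ∑ x, p x * c = c := by rw [← Finset.sum_mul, hp.2, one_mul]
  constructor
  · calc lo = ∑ x, p x * lo := (total lo).symm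
      _ ≤ linExp p f := Finset.sum_le_sum fun x _ => mul_le_mul_of_nonneg_left (hf x).1 (hp.1 x)
  · calc linExp p f ≤ ∑ x, p x * hi :=
          Finset.sum_le_sum fun x _ => mul_le_mul_of_nonneg_left (hf x).2 (hp.1 x)
      _ = hi := total hi

lemma linExp_affine {p : X → ℝ} (hp : IsPMF p) (a b : ℝ) (h : X → ℝ) :
    linExp p (fun y => a * h y + b) = a * linExp p h + b := by
  simp only [linExp, mul_add, Finset.sum_add_distrib, ← Finset.sum_mul, hp.2, one_mul,
    mul_left_comm _ a, ← Finset.mul_sum]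

namespace IsCredal

variable {M : Set (X → ℝ)}

lemma exists_isGreatest_linExp (hM : IsCredal M) (f : X → ℝ) :
    ∃ p ∈ M, IsGreatest ((fun q => linExp q f) '' M) (linExp p f) := by
  obtain ⟨hne, hcpt, -, -⟩ := hM
  have hcont : Continuous fun q : X → ℝ => linExp q f :=
    continuous_finsetSum _ fun x _ => (continuous_apply x).mul continuous_const
  obtain ⟨p, hpM, hmax⟩ := hcpt.exists_isMaxOn hne hcont.continuousOn
  exact ⟨p, hpM, ⟨p, hpM, rfl⟩, by rintro _ ⟨q, hq, rfl⟩; exact hmax hq⟩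

lemma upperExp_mem_bounds (hM : IsCredal M) {f : X → ℝ} {lo hi : ℝ}
    (hf : ∀ x, lo ≤ f x ∧ f x ≤ hi) : lo ≤ upperExp M f ∧ upperExp M f ≤ hi := by
  obtain ⟨p, hpM, hp⟩ := hM.exists_isGreatest_linExp f
  rw [upperExp, hp.csSup_eq]
  exact linExp_mem_bounds (hM.2.2.2 p hpM) hf

lemma upperExp_affine (hM : IsCredal M) {a : ℝ} (ha : 0 ≤ a) (b : ℝ) (h : X → ℝ) :
    upperExp M (fun y => a * h y + b) = a * upperExp M h + b := by
  obtain ⟨p, hpM, hp⟩ := hM.exists_isGreatest_linExp h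
  have hgreatest : IsGreatest ((fun q => linExp q (fun y => a * h y + b)) '' M)
      (a * linExp p h + b) := by
    refine ⟨⟨p, hpM, linExp_affine (hM.2.2.2 p hpM) a b h⟩, ?_⟩
    rintro _ ⟨q, hq, rfl⟩
    simp only [linExp_affine (hM.2.2.2 q hq)]
    gcongr
    exact hp.2 ⟨q, hq, rfl⟩
  rw [upperExp, upperExp, hgreatest.csSup_eq, hp.csSup_eq]

end IsCredal

namespace IsUpperTrans

variable {T : (X → ℝ) → (X → ℝ)}

lemma apply_mem_bounds (hT : IsUpperTrans T) {f : X → ℝ} {lo hi : ℝ}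
    (hf : ∀ x, lo ≤ f x ∧ f x ≤ hi) (x : X) : lo ≤ T f x ∧ T f x ≤ hi := by
  obtain ⟨M, hM, hrep⟩ := hT
  rw [hrep]
  exact (hM x).upperExp_mem_bounds hf

lemma apply_affine (hT : IsUpperTrans T) {a : ℝ} (ha : 0 ≤ a) (b : ℝ) (h : X → ℝ) (x : X) :
    T (fun y => a * h y + b) x = a * T h x + b := by
  obtain ⟨M, hM, hrep⟩ := hT
  rw [hrep, hrep, (hM x).upperExp_affine ha]

lemma bddAbove_rho_set (hT : IsUpperTrans T) :
    BddAbove {r | ∃ f ∈ L1 X, ∃ x y : X, r = |T f x - T f y|} := by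
  refine ⟨1, ?_⟩
  rintro _ ⟨f, hf, x, y, rfl⟩
  have hx := hT.apply_mem_bounds hf x
  have hy := hT.apply_mem_bounds hf y
  rw [abs_le]
  constructor <;> linarith

lemma abs_sub_le_rho (hT : IsUpperTrans T) {f : X → ℝ} (hf : f ∈ L1 X) (x y : X) :
    |T f x - T f y| ≤ rho T :=
  le_csSup hT.bddAbove_rho_set ⟨f, hf, x, y, rfl⟩

lemma rho_nonneg [Nonempty X] (hT : IsUpperTrans T) : 0 ≤ rho T := by
  have x : X := Classical.arbitrary X
  simpa using hT.abs_sub_le_rho (f := fun _ => 0) (fun _ => ⟨le_rfl, zero_le_one⟩) x x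

lemma abs_sub_le_mul_rho (hT : IsUpperTrans T) {g : X → ℝ} {lo hi : ℝ}
    (hg : ∀ z, lo ≤ g z ∧ g z ≤ hi) (x y : X) :
    |T g x - T g y| ≤ (hi - lo) * rho T := by
  set c := hi - lo
  have hc : 0 ≤ c := by linarith [hg x]
  -- When `c = 0` the division below is junk, but then `g` is constant and `g = c * h + lo` still holds.
  set h : X → ℝ := fun z => (g z - lo) / c
  have hh : h ∈ L1 X := fun z =>
    ⟨div_nonneg (by linarith [hg z]) hc, div_le_one_of_le₀ (by linarith [hg z]) hc⟩
  have hgh : g = fun z => c * h z + lo := by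
    funext z
    rcases hc.eq_or_lt with hc0 | hcpos
    · have := hg z
      simp only [← hc0, zero_mul, zero_add]
      linarith
    · simp only [h, mul_div_cancel₀ _ hcpos.ne', sub_add_cancel]
  calc |T g x - T g y| = c * |T h x - T h y| := by
        rw [hgh, hT.apply_affine hc, hT.apply_affine hc, add_sub_add_right_eq_sub, ← mul_sub,
          abs_mul, abs_of_nonneg hc]
    _ ≤ c * rho T := by gcongr; exact hT.abs_sub_le_rho hh x y

end IsUpperTrans

end

lemma rho_le_of_forall {X : Type*} [Nonempty X] {T : (X → ℝ) → (X → ℝ)} {c : ℝ}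
    (h : ∀ f ∈ L1 X, ∀ x y : X, |T f x - T f y| ≤ c) : rho T ≤ c := by
  have x : X := Classical.arbitrary X
  refine csSup_le ⟨_, 0, fun _ => ⟨le_rfl, zero_le_one⟩, x, x, rfl⟩ ?_
  rintro _ ⟨f, hf, x, y, rfl⟩
  exact h f hf x y

theorem stmt9 {X : Type*} [Fintype X] [Nonempty X]
    (T S : (X → ℝ) → (X → ℝ)) (hT : IsUpperTrans T) (hS : IsUpperTrans S) :
    rho (fun f => T (S f)) ≤ rho T * rho S := by
  refine rho_le_of_forall fun f hf x y => ?_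
  obtain ⟨x₀, hx₀⟩ := Finite.exists_min (S f)
  obtain ⟨x₁, hx₁⟩ := Finite.exists_max (S f)
  have hwidth : S f x₁ - S f x₀ ≤ rho S :=
    (le_abs_self _).trans (hS.abs_sub_le_rho hf x₁ x₀)
  calc |T (S f) x - T (S f) y| ≤ (S f x₁ - S f x₀) * rho T :=
        hT.abs_sub_le_mul_rho (fun z => ⟨hx₀ z, hx₁ z⟩) x y
    _ ≤ rho S * rho T := by gcongr; exact hT.rho_nonneg
    _ = rho T * rho S := mul_comm _ _
end
end
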